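/- arXiv:2510.21506 — 3 statements merged into one kernel-verified Lean document; each statement's English description precedes it below -/
import Mathlib

section
/- Let ε > 0 and let Q be a collection of probability measures on {0,1}^ℕ that has a countable ε-cover for its means. Then there exists a sequence of measurable estimators A_n : ({0,1}^ℕ)^n → [0,1]^ℕ such that for every μ ∈ Q, with probability 1 over an i.i.d. sample sequence X^(1), X^(2), … ∼ μ, there exists n_0 ∈ ℕ such that for all n > n_0, ‖A_n(X^(1),…,X^(n)) − Mean(μ)‖_∞ ≤ ε. -/
/-!
Enumerate the cover as `e 0, e 1, …`. From `n` samples take `m = ⌊n^{1/3}⌋`, compute the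
empirical frequencies of the first `m` coordinates over the first `m³` samples, and output the
first `e k` with `k < m` that is `ε`-close to these frequencies on those coordinates.

By Chebyshev's inequality for pairwise independent indicators, one frequency is off by `t` with
probability at most `1/(4m³t²)`, so some of the `m` frequencies is off with probability at most
`1/(4m²t²)`, which is summable; by Borel–Cantelli, almost surely all of them are eventually
`t`-accurate. If `e ks` is strictly within `ε` of `Mean(μ)`, then for small `t` it is eventually
accepted, while every earlier candidate that is farther than `ε` from `Mean(μ)` misses it by more
than `ε + t` at one fixed coordinate and is eventually rejected there.
-/

open MeasureTheory Filter

/-- The sup-distance `‖p − q‖_∞ = ⨆ j, |p j − q j|` between two vectors. -/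
noncomputable def supDist {ι : Type*} (p q : ι → ℝ) : ℝ := ⨆ j, |p j - q j|

/-- The mean vector of a measure on `{0,1}^ι`: `Mean(μ)_j = μ {x | x j = 1}`. -/
noncomputable def meanVec {ι : Type*} (μ : Measure (ι → Bool)) : ι → ℝ :=
  fun j => (μ {x | x j = true}).toReal

/-- `ν` is the law of an i.i.d. infinite sequence of samples from `μ`, i.e. the countable
product measure `μ^ℕ`: it is a probability measure whose finite-dimensional cylinder
probabilities factor as products of `μ`-probabilities. -/
def IsIIDSeq {Ω : Type*} [MeasurableSpace Ω] (μ : Measure Ω) (ν : Measure (ℕ → Ω)) : Prop :=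
  IsProbabilityMeasure ν ∧
  ∀ (F : Finset ℕ) (A : ℕ → Set Ω), (∀ i, MeasurableSet (A i)) →
    ν {ω | ∀ i ∈ F, ω i ∈ A i} = ∏ i ∈ F, μ (A i)

open ProbabilityTheory Topology Finset

section SupDist

variable {ι : Type*}

lemma supDist_comm (p q : ι → ℝ) : supDist p q = supDist q p := by
  simp only [supDist, abs_sub_comm]

lemma supDist_le [Nonempty ι] {p q : ι → ℝ} {c : ℝ} (h : ∀ j, |p j - q j| ≤ c) :
    supDist p q ≤ c :=
  ciSup_le h

lemma abs_sub_le_supDist {p q : ι → ℝ} (hp : ∀ j, p j ∈ Set.Icc (0 : ℝ) 1)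
    (hq : ∀ j, q j ∈ Set.Icc (0 : ℝ) 1) (j : ι) : |p j - q j| ≤ supDist p q := by
  refine le_ciSup (f := fun j => |p j - q j|) ⟨1, ?_⟩ j
  rintro _ ⟨i, rfl⟩
  exact abs_sub_le_iff.2 ⟨by linarith [(hp i).2, (hq i).1], by linarith [(hp i).1, (hq i).2]⟩

lemma meanVec_mem_Icc {μ : Measure (ι → Bool)} [IsProbabilityMeasure μ] (j : ι) :
    meanVec μ j ∈ Set.Icc (0 : ℝ) 1 :=
  ⟨ENNReal.toReal_nonneg, ENNReal.toReal_le_of_le_ofReal zero_le_one (by simpa using prob_le_one)⟩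

end SupDist

section Selection

variable {ε : ℝ} {e : ℕ → ℕ → ℝ} {p : ℕ → ℝ}

open Classical in
noncomputable def firstFit (ε : ℝ) (e : ℕ → ℕ → ℝ) (m : ℕ) (q : Fin m → ℝ) : ℕ → ℝ :=
  if h : ∃ k < m, ∀ j : Fin m, |q j - e k j| < ε then e (Nat.find h) else e 0

lemma firstFit_mem_range (m : ℕ) (q : Fin m → ℝ) : firstFit ε e m q ∈ Set.range e := by
  unfold firstFit
  split <;> exact ⟨_, rfl⟩

lemma supDist_firstFit_le {t : ℝ} {ks M m : ℕ} {q : Fin m → ℝ}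
    (hks : ∀ j, |e ks j - p j| + t ≤ ε) (hksm : ks < m) (hMm : M ≤ m)
    (hrej : ∀ k < ks, ε < supDist (e k) p → ∃ j < M, ε + t ≤ |e k j - p j|)
    (hq : ∀ j : Fin m, |q j - p j| < t) :
    supDist (firstFit ε e m q) p ≤ ε := by
  classical
  have hks_fit : ∀ j : Fin m, |q j - e ks j| < ε := fun j => by
    linarith [abs_sub_le (q j) (p j) (e ks j), hq j, hks j, abs_sub_comm (e ks j) (p j)]
  have hfit : ∃ k < m, ∀ j : Fin m, |q j - e k j| < ε := ⟨ks, hksm, hks_fit⟩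
  obtain ⟨-, hkfit⟩ := Nat.find_spec hfit
  have hk_le : Nat.find hfit ≤ ks := Nat.find_min' hfit ⟨hksm, hks_fit⟩
  rw [firstFit, dif_pos hfit]
  by_contra! hfar
  rcases hk_le.lt_or_eq with hlt | heq
  · obtain ⟨j, hjM, hj⟩ := hrej _ hlt hfar
    have hjm : j < m := hjM.trans_le hMm
    linarith [abs_sub_le (e (Nat.find hfit) j) (q ⟨j, hjm⟩) (p j), hkfit ⟨j, hjm⟩,
      hq ⟨j, hjm⟩, abs_sub_comm (e (Nat.find hfit) j) (q ⟨j, hjm⟩)]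
  · have ht : 0 ≤ t := (abs_nonneg _).trans (hq ⟨ks, hksm⟩).le
    exact hfar.not_ge (heq ▸ supDist_le fun j => by linarith [hks j])

end Selection

lemma exists_separating_margin {ε : ℝ} {e : ℕ → ℕ → ℝ} {p : ℕ → ℝ} {ks : ℕ}
    (hp : ∀ j, p j ∈ Set.Icc (0 : ℝ) 1) (he : ∀ j, e ks j ∈ Set.Icc (0 : ℝ) 1)
    (hks : supDist (e ks) p < ε) :
    ∃ t > 0, ∃ M, (∀ j, |e ks j - p j| + t ≤ ε) ∧
      ∀ k < ks, ε < supDist (e k) p → ∃ j < M, ε + t ≤ |e k j - p j| := by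
  have eventually_le_of_pos {δ : ℝ} (hδ : 0 < δ) : ∀ᶠ t in 𝓝[>] (0 : ℝ), t ≤ δ :=
    eventually_nhdsWithin_of_eventually_nhds (eventually_le_nhds hδ)
  have hgood : ∀ᶠ t in 𝓝[>] (0 : ℝ), 0 < t ∧ ∀ j, |e ks j - p j| + t ≤ ε := by
    filter_upwards [self_mem_nhdsWithin, eventually_le_of_pos (sub_pos.2 hks)] with t ht htδ
    exact ⟨ht, fun j => by linarith [abs_sub_le_supDist he hp j]⟩
  have hbad : ∀ k, ∀ᶠ x : ℝ × ℕ in 𝓝[>] 0 ×ˢ atTop,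
      ε < supDist (e k) p → ∃ j < x.2, ε + x.1 ≤ |e k j - p j| := by
    intro k
    by_cases hk : ε < supDist (e k) p
    · obtain ⟨j, hj⟩ : ∃ j, ε < |e k j - p j| := by
        by_contra! h
        exact hk.not_ge (supDist_le h)
      filter_upwards [(eventually_le_of_pos (sub_pos.2 hj)).prod_mk (eventually_gt_atTop j)]
        with x hx _
      exact ⟨j, hx.2, by linarith [hx.1]⟩
    · exact Eventually.of_forall fun _ h => absurd h hk
  obtain ⟨⟨t, M⟩, ⟨ht, hacc⟩, hrej⟩ := ((hgood.prod_inl atTop).and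
    ((eventually_all_finite (Set.finite_lt_nat ks)).2 fun k _ => hbad k)).exists
  exact ⟨t, ht, M, hacc, hrej⟩

section Estimator

lemma nthRoot_three_pow_le (n : ℕ) : Nat.nthRoot 3 n ^ 3 ≤ n :=
  Nat.pow_nthRoot_le_iff.2 (Or.inl three_ne_zero)

lemma tendsto_nthRoot_three_atTop : Tendsto (Nat.nthRoot 3) atTop atTop :=
  tendsto_atTop_atTop.2 fun b => ⟨b ^ 3, fun _ hn => (Nat.le_nthRoot_iff three_ne_zero).2 hn⟩

def sampleTable (n : ℕ) (S : Fin n → ℕ → Bool) :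
    Fin (Nat.nthRoot 3 n ^ 3) → Fin (Nat.nthRoot 3 n) → Bool :=
  fun i j => S (Fin.castLE (nthRoot_three_pow_le n) i) j

noncomputable def colFreq {N m : ℕ} (T : Fin N → Fin m → Bool) (j : Fin m) : ℝ :=
  (∑ i, if T i j then 1 else 0) / N

noncomputable def estimator (ε : ℝ) (e : ℕ → ℕ → ℝ) (n : ℕ) (S : Fin n → ℕ → Bool) : ℕ → ℝ :=
  firstFit ε e (Nat.nthRoot 3 n) (colFreq (sampleTable n S))

lemma measurable_estimator (ε : ℝ) (e : ℕ → ℕ → ℝ) (n : ℕ) : Measurable (estimator ε e n) :=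
  (Measurable.of_discrete (f := firstFit ε e _ ∘ colFreq)).comp
    (by unfold sampleTable; fun_prop : Measurable (sampleTable n))

lemma colFreq_sampleTable (ω : ℕ → ℕ → Bool) (n : ℕ) (j : Fin (Nat.nthRoot 3 n)) :
    colFreq (sampleTable n fun i : Fin n => ω i) j =
      (∑ i ∈ range (Nat.nthRoot 3 n ^ 3), if ω i j then 1 else 0) / (Nat.nthRoot 3 n ^ 3 : ℕ) :=
  congrArg (· / _) (Fin.sum_univ_eq_sum_range (fun i => if ω i j then (1 : ℝ) else 0) _)

end Estimator

namespace IsIIDSeq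

section

variable {Ω : Type*} [MeasurableSpace Ω] {μ : Measure Ω} {ν : Measure (ℕ → Ω)}

lemma measure_eval_preimage (hI : IsIIDSeq μ ν) (i : ℕ) {A : Set Ω} (hA : MeasurableSet A) :
    ν ((fun ω => ω i) ⁻¹' A) = μ A :=
  (by simpa using hI.2 {i} (fun _ => A) fun _ => hA : ν {ω | ω i ∈ A} = μ A)

lemma measure_eval_preimage_inter (hI : IsIIDSeq μ ν) {i i' : ℕ} (hii' : i ≠ i') {A B : Set Ω}
    (hA : MeasurableSet A) (hB : MeasurableSet B) :
    ν ((fun ω => ω i) ⁻¹' A ∩ (fun ω => ω i') ⁻¹' B) = μ A * μ B := by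
  have h := hI.2 {i, i'} (fun l => if l = i then A else B) (fun l => by split_ifs <;> assumption)
  rw [prod_pair hii', if_pos rfl, if_neg hii'.symm] at h
  rw [← h]
  congr 1
  ext ω
  simp [hii'.symm]

lemma map_eval (hI : IsIIDSeq μ ν) (i : ℕ) : ν.map (fun ω => ω i) = μ :=
  Measure.ext fun _ hA => by rw [Measure.map_apply (measurable_pi_apply i) hA,
    hI.measure_eval_preimage i hA]

lemma isProbabilityMeasure (hI : IsIIDSeq μ ν) : IsProbabilityMeasure μ :=
  have := hI.1
  hI.map_eval 0 ▸ Measure.isProbabilityMeasure_map (measurable_pi_apply 0).aemeasurable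

lemma identDistrib_eval (hI : IsIIDSeq μ ν) (i : ℕ) : IdentDistrib (fun ω => ω i) id ν μ :=
  ⟨(measurable_pi_apply i).aemeasurable, aemeasurable_id, by rw [Measure.map_id, hI.map_eval]⟩

lemma indepFun_eval (hI : IsIIDSeq μ ν) {i i' : ℕ} (hii' : i ≠ i') :
    IndepFun (fun ω => ω i) (fun ω => ω i') ν := by
  rw [indepFun_iff_measure_inter_preimage_eq_mul]
  intro A B hA hB
  rw [hI.measure_eval_preimage_inter hii' hA hB, hI.measure_eval_preimage i hA,
    hI.measure_eval_preimage i' hB]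

lemma measure_le_abs_avg_sub_integral (hI : IsIIDSeq μ ν) {g : Ω → ℝ} (hg : Measurable g)
    (hg2 : MemLp g 2 μ) {N : ℕ} (hN : 0 < N) {t : ℝ} (ht : 0 < t) :
    ν {ω | t ≤ |(∑ i ∈ range N, g (ω i)) / N - μ[g]|} ≤
      ENNReal.ofReal (Var[g; μ] / (N * t ^ 2)) := by
  have := hI.1
  set X : ℕ → (ℕ → Ω) → ℝ := fun i ω => g (ω i)
  have hdist (i : ℕ) : IdentDistrib (X i) g ν μ := (hI.identDistrib_eval i).comp hg
  have hX2 (i : ℕ) : MemLp (X i) 2 ν := (hdist i).memLp_iff.2 hg2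
  have hmean : ∫ ω', (∑ i ∈ range N, X i) ω' ∂ν = N * μ[g] := by
    simp only [Finset.sum_apply]
    rw [integral_finsetSum _ fun i _ => (hX2 i).integrable one_le_two]
    simp [(hdist _).integral_eq]
  have hvar : Var[∑ i ∈ range N, X i; ν] = N * Var[g; μ] := by
    rw [IndepFun.variance_sum (fun i _ => hX2 i) fun i _ i' _ h => (hI.indepFun_eval h).comp hg hg]
    simp [(hdist _).variance_eq]
  have hN' : (0 : ℝ) < N := Nat.cast_pos.2 hN
  have hevent : {ω | t ≤ |(∑ i ∈ range N, g (ω i)) / N - μ[g]|} =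
      {ω | N * t ≤ |(∑ i ∈ range N, X i) ω - ∫ ω', (∑ i ∈ range N, X i) ω' ∂ν|} := by
    ext ω
    have hscale : (∑ i ∈ range N, X i) ω - ∫ ω', (∑ i ∈ range N, X i) ω' ∂ν =
        N * ((∑ i ∈ range N, g (ω i)) / N - μ[g]) := by
      rw [hmean, Finset.sum_apply]
      field_simp
      rfl
    simp only [Set.mem_ofPred_eq, hscale, abs_mul, abs_of_pos hN', mul_le_mul_iff_right₀ hN']
  calc ν {ω | t ≤ |(∑ i ∈ range N, g (ω i)) / N - μ[g]|}
      ≤ ENNReal.ofReal (Var[∑ i ∈ range N, X i; ν] / (N * t) ^ 2) :=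
        hevent ▸ meas_ge_le_variance_div_sq (memLp_finsetSum' _ fun i _ => hX2 i) (by positivity)
    _ = ENNReal.ofReal (Var[g; μ] / (N * t ^ 2)) := by
        rw [hvar]
        congr 1
        field_simp

end

section

variable {μ : Measure (ℕ → Bool)} {ν : Measure (ℕ → ℕ → Bool)}

lemma measure_le_abs_freq_sub_meanVec (hI : IsIIDSeq μ ν) (j : ℕ) {N : ℕ} (hN : 0 < N) {t : ℝ}
    (ht : 0 < t) :
    ν {ω | t ≤ |(∑ i ∈ range N, if ω i j then (1 : ℝ) else 0) / N - meanVec μ j|} ≤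
      ENNReal.ofReal (1 / (4 * N * t ^ 2)) := by
  have := hI.isProbabilityMeasure
  set g : (ℕ → Bool) → ℝ := fun x => if x j then 1 else 0
  have hg : Measurable g :=
    (Measurable.of_discrete (f := fun b : Bool => if b then (1 : ℝ) else 0)).comp
      (measurable_pi_apply j)
  have hg01 (x : ℕ → Bool) : g x ∈ Set.Icc (0 : ℝ) 1 := by by_cases h : x j <;> simp [g, h]
  have hmean : μ[g] = meanVec μ j := by
    have : g = {x | x j = true}.indicator 1 := by ext x; by_cases h : x j <;> simp [g, h]
    have hs : MeasurableSet {x : ℕ → Bool | x j = true} :=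
      (measurableSet_singleton true).preimage (measurable_pi_apply j)
    rw [this, integral_indicator_one hs]
    rfl
  have hvar : Var[g; μ] ≤ 1 / 4 :=
    (variance_le_sq_of_bounded (ae_of_all μ hg01) hg.aemeasurable).trans_eq (by norm_num)
  have hg2 : MemLp g 2 μ := MemLp.of_bound hg.aestronglyMeasurable 1 <| ae_of_all _ fun x => by
    simpa [abs_le] using ⟨(hg01 x).1.trans' (by norm_num), (hg01 x).2⟩
  rw [← hmean]
  refine (hI.measure_le_abs_avg_sub_integral hg hg2 hN ht).trans (ENNReal.ofReal_le_ofReal ?_)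
  calc Var[g; μ] / (N * t ^ 2) ≤ 1 / 4 / (N * t ^ 2) := by gcongr
    _ = 1 / (4 * N * t ^ 2) := by ring

lemma ae_eventually_forall_abs_freq_sub_meanVec_lt (hI : IsIIDSeq μ ν) {t : ℝ} (ht : 0 < t) :
    ∀ᵐ ω ∂ν, ∀ᶠ m in atTop, ∀ j < m,
      |(∑ i ∈ range (m ^ 3), if ω i j then (1 : ℝ) else 0) / (m ^ 3 : ℕ) - meanVec μ j| < t := by
  set bad : ℕ → Set (ℕ → ℕ → Bool) := fun m => ⋃ j ∈ range m,
    {ω | t ≤ |(∑ i ∈ range (m ^ 3), if ω i j then (1 : ℝ) else 0) / (m ^ 3 : ℕ) - meanVec μ j|}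
  have hbad (m : ℕ) : ν (bad m) ≤ ENNReal.ofReal (1 / (4 * t ^ 2) * (1 / m ^ 2)) := by
    rcases m.eq_zero_or_pos with rfl | hm
    · simp [bad]
    calc ν (bad m)
        ≤ ∑ j ∈ range m, ν {ω | t ≤
            |(∑ i ∈ range (m ^ 3), if ω i j then (1 : ℝ) else 0) / (m ^ 3 : ℕ) - meanVec μ j|} :=
          measure_biUnion_finset_le _ _
      _ ≤ ∑ j ∈ range m, ENNReal.ofReal (1 / (4 * (m ^ 3 : ℕ) * t ^ 2)) :=
          sum_le_sum fun j _ => hI.measure_le_abs_freq_sub_meanVec j (by positivity) ht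
      _ = ENNReal.ofReal (1 / (4 * t ^ 2) * (1 / m ^ 2)) := by
          rw [sum_const, card_range, nsmul_eq_mul, ← ENNReal.ofReal_natCast,
            ← ENNReal.ofReal_mul (by positivity)]
          congr 1
          field_simp
          push_cast
          ring
  have hsum : ∑' m, ν (bad m) ≠ ⊤ :=
    ne_top_of_le_ne_top
      ((Real.summable_one_div_nat_pow.2 one_lt_two).mul_left _).tsum_ofReal_ne_top
      (ENNReal.tsum_le_tsum hbad)
  filter_upwards [ae_eventually_notMem hsum] with ω hω
  filter_upwards [hω] with m hm j hj
  by_contra! h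
  exact hm (Set.mem_biUnion (mem_range.2 hj) h)

end

end IsIIDSeq

theorem countable_cover_eventually_eps_close_general
    (ε : ℝ) (Q : Set (Measure (ℕ → Bool)))
    (D : Set (ℕ → ℝ)) (hDcount : D.Countable)
    (hD01 : ∀ p ∈ D, ∀ j, p j ∈ Set.Icc (0 : ℝ) 1)
    (hcover : ∀ μ ∈ Q, ∃ p ∈ D, supDist (meanVec μ) p < ε) :
    ∃ A : (n : ℕ) → (Fin n → (ℕ → Bool)) → ℕ → ℝ,
      (∀ n, Measurable (A n)) ∧
      (∀ n S j, A n S j ∈ Set.Icc (0 : ℝ) 1) ∧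
      ∀ μ ∈ Q, ∀ ν : Measure (ℕ → (ℕ → Bool)), IsIIDSeq μ ν →
        ∀ᵐ ω ∂ν, ∃ n₀ : ℕ, ∀ n > n₀,
          supDist (A n (fun i : Fin n => ω i)) (meanVec μ) ≤ ε := by
  obtain ⟨e, he⟩ := (hDcount.insert 0).exists_eq_range (Set.insert_nonempty 0 D)
  have he01 (k j : ℕ) : e k j ∈ Set.Icc (0 : ℝ) 1 := by
    rcases (he ▸ Set.mem_range_self k : e k ∈ insert 0 D) with h | h
    · simp [h]
    · exact hD01 _ h j
  refine ⟨estimator ε e, measurable_estimator ε e, fun n S j => ?_, fun μ hμ ν hI => ?_⟩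
  · obtain ⟨k, hk⟩ := firstFit_mem_range (ε := ε) (e := e) _ (colFreq (sampleTable n S))
    rw [estimator, ← hk]
    exact he01 k j
  have := hI.isProbabilityMeasure
  obtain ⟨p, hpD, hp⟩ := hcover μ hμ
  obtain ⟨ks, rfl⟩ : p ∈ Set.range e := he ▸ Set.mem_insert_of_mem 0 hpD
  obtain ⟨t, ht, M, hks, hrej⟩ :=
    exists_separating_margin meanVec_mem_Icc (he01 ks) (supDist_comm (meanVec μ) _ ▸ hp)
  filter_upwards [hI.ae_eventually_forall_abs_freq_sub_meanVec_lt ht] with ω hω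
  obtain ⟨n₀, hn₀⟩ := eventually_atTop.1 <|
    tendsto_nthRoot_three_atTop.eventually (hω.and (eventually_gt_atTop (max ks M)))
  refine ⟨n₀, fun n hn => ?_⟩
  obtain ⟨hfreq, hm⟩ := hn₀ n hn.le
  exact supDist_firstFit_le hks ((le_max_left _ _).trans_lt hm)
    ((le_max_right _ _).trans hm.le) hrej fun j => colFreq_sampleTable ω n j ▸ hfreq j j.2

/-- If `Q` has a countable `ε`-cover for its means, then there are measurable estimators
`A n : ({0,1}^ℕ)^n → [0,1]^ℕ` such that for every `μ ∈ Q`, almost surely over an i.i.d.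
sample sequence from `μ`, eventually (for all `n` beyond some `n₀`) the estimate from the
first `n` samples is within `ε` of `Mean μ` in sup-distance. -/
theorem countable_cover_eventually_eps_close
    (ε : ℝ) (hε : 0 < ε) (Q : Set (Measure (ℕ → Bool)))
    (hQprob : ∀ μ ∈ Q, IsProbabilityMeasure μ)
    (D : Set (ℕ → ℝ)) (hDcount : D.Countable)
    (hD01 : ∀ p ∈ D, ∀ j, p j ∈ Set.Icc (0 : ℝ) 1)
    (hcover : ∀ μ ∈ Q, ∃ p ∈ D, supDist (meanVec μ) p < ε) :
    ∃ A : (n : ℕ) → (Fin n → (ℕ → Bool)) → ℕ → ℝ,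
      (∀ n, Measurable (A n)) ∧
      (∀ n S j, A n S j ∈ Set.Icc (0 : ℝ) 1) ∧
      ∀ μ ∈ Q, ∀ ν : Measure (ℕ → (ℕ → Bool)), IsIIDSeq μ ν →
        ∀ᵐ ω ∂ν, ∃ n₀ : ℕ, ∀ n > n₀,
          supDist (A n (fun i : Fin n => ω i)) (meanVec μ) ≤ ε :=
  countable_cover_eventually_eps_close_general ε Q D hDcount hD01 hcover
end

section
/- The collection Q_tree is UME-learnable: there exists a sequence of measurable estimators A_n : ({0,1}^V)^n → [0,1]^V (where V is the countable set of vertices of the infinite binary tree) such that for every branch b ∈ {0,1}^ℕ and μ = Prod(q^b), E_{S∼μ^n} ‖A_n(S) − q^b‖_∞ → 0 as n → ∞. -/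
open MeasureTheory Filter

/-- `μ = Prod q`: the product probability measure on `{0,1}^ι` with independent
coordinates, the `v`-th coordinate having mean `q v`. -/
def IsBernoulliProduct {ι : Type*} (q : ι → ℝ) (μ : Measure (ι → Bool)) : Prop :=
  IsProbabilityMeasure μ ∧
  ∀ (F : Finset ι) (f : ι → Bool),
    μ {x | ∀ j ∈ F, x j = f j} = ∏ j ∈ F, ENNReal.ofReal (if f j then q j else 1 - q j)

/-- The length-`j` prefix of an infinite branch `b ∈ {0,1}^ℕ`, as a vertex of the
infinite binary tree (a finite binary string). -/
def pref (b : ℕ → Bool) (j : ℕ) : List Bool := List.ofFn fun k : Fin j => b k.1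

/-- The mean vector of the tree distribution associated to the branch `b`:
value `2/3` at every vertex lying on the branch (i.e. every prefix of `b`, including the
root), and `1/3` at every other vertex. -/
noncomputable def qBranch (b : ℕ → Bool) : List Bool → ℝ :=
  fun v => if pref b v.length = v then 2 / 3 else 1 / 3

open Finset

/-!
The estimator declares a vertex `v` of depth `d` to lie on the branch iff some downward path
`v = u₀, u₁, …, u_d` below `v` carries at least half ones among the `n (d + 1)` sample bits at its
vertices. Below an on-branch vertex the branch itself is such a path with all means `2/3`; below an
off-branch vertex all means are `1/3`. Markov's inequality for `2 ^ (number of ones)` bounds the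
failure probability at `v` by `2 ^ d * r_n ^ (d + 1)` with `r_n = (4/3)^n / 2^(n/2) → 0`; the `2^d`
vertices of depth `d` then fail with probability at most `4^d r_n^(d+1)`, which sums to `O(r_n)`.
As the estimator and the means both take values in `{1/3, 2/3}`, the sup-error is at most `1/3`
times the indicator of failure.
-/

theorem measure_sum_toNat_ge_le {Ω κ : Type*} [MeasurableSpace Ω] [Fintype κ] (ν : Measure Ω)
    {X : κ → Ω → Bool} {w : Bool → ℝ} (hw : ∀ x, 0 ≤ w x)
    (hX : ∀ g : κ → Bool, ν {ω | ∀ c, X c ω = g c} = ∏ c, ENNReal.ofReal (w (g c))) (m : ℕ) :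
    ν {ω | m ≤ ∑ c, (X c ω).toNat}
      ≤ ENNReal.ofReal ((w false + 2 * w true) ^ Fintype.card κ / 2 ^ m) := by
  classical
  set T := univ.filter fun g : κ → Bool => m ≤ ∑ c, (g c).toNat
  have hsub : {ω | m ≤ ∑ c, (X c ω).toNat} ⊆ ⋃ g ∈ T, {ω | ∀ c, X c ω = g c} := fun ω hω =>
    Set.mem_biUnion (x := fun c => X c ω) (by simpa [T] using hω) fun _ => rfl
  -- Markov's inequality for `2 ^ (number of trues)`, whose mean factorises over `κ`.
  have hsum : ∑ g ∈ T, ∏ c, w (g c) ≤ (w false + 2 * w true) ^ Fintype.card κ / 2 ^ m := by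
    calc ∑ g ∈ T, ∏ c, w (g c)
        ≤ ∑ g ∈ T, 2 ^ (∑ c, (g c).toNat) / 2 ^ m * ∏ c, w (g c) := by
          refine sum_le_sum fun g hg => le_mul_of_one_le_left (prod_nonneg fun c _ => hw _) ?_
          rw [one_le_div (by positivity)]
          exact pow_le_pow_right₀ one_le_two (mem_filter.1 hg).2
      _ ≤ ∑ g : κ → Bool, 2 ^ (∑ c, (g c).toNat) / 2 ^ m * ∏ c, w (g c) :=
          sum_le_sum_of_subset_of_nonneg (subset_univ T) fun g _ _ =>
            mul_nonneg (by positivity) (prod_nonneg fun c _ => hw _)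
      _ = (∏ c : κ, ∑ x : Bool, 2 ^ x.toNat * w x) / 2 ^ m := by
          rw [Fintype.prod_sum, sum_div]
          refine sum_congr rfl fun g _ => ?_
          rw [← prod_pow_eq_pow_sum, div_mul_eq_mul_div, prod_mul_distrib]
      _ = (w false + 2 * w true) ^ Fintype.card κ / 2 ^ m := by simp [add_comm]
  calc ν {ω | m ≤ ∑ c, (X c ω).toNat}
      ≤ ∑ g ∈ T, ν {ω | ∀ c, X c ω = g c} :=
        (measure_mono hsub).trans (measure_biUnion_finset_le T _)
    _ = ENNReal.ofReal (∑ g ∈ T, ∏ c, w (g c)) := by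
        rw [ENNReal.ofReal_sum_of_nonneg fun g _ => prod_nonneg fun c _ => hw _]
        simp_rw [hX, ENNReal.ofReal_prod_of_nonneg fun c _ => hw _]
    _ ≤ _ := ENNReal.ofReal_le_ofReal hsum

theorem IsBernoulliProduct.measure_cylinder {ι κ : Type*} [Fintype κ] {q : ι → ℝ}
    {μ : Measure (ι → Bool)} (hμ : IsBernoulliProduct q μ) {u : κ → ι} (hu : Function.Injective u)
    (g : κ → Bool) :
    μ {x | ∀ j, x (u j) = g j} = ∏ j, ENNReal.ofReal (if g j then q (u j) else 1 - q (u j)) := by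
  classical
  simpa [hu.extend_apply] using hμ.2 (univ.map ⟨u, hu⟩) (Function.extend u g fun _ => false)

theorem IsBernoulliProduct.measure_pi_cylinder {ι κ T : Type*} [Fintype κ] [Fintype T]
    {q : ι → ℝ} {μ : Measure (ι → Bool)} (hμ : IsBernoulliProduct q μ) {u : κ → ι}
    (hu : Function.Injective u) (g : T × κ → Bool) :
    Measure.pi (fun _ : T => μ) {S | ∀ c : T × κ, S c.1 (u c.2) = g c}
      = ∏ c, ENNReal.ofReal (if g c then q (u c.2) else 1 - q (u c.2)) := by
  have := hμ.1
  have hpi : {S : T → ι → Bool | ∀ c : T × κ, S c.1 (u c.2) = g c}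
      = Set.univ.pi fun i => {x | ∀ j, x (u j) = g (i, j)} := by
    ext S
    simp [Prod.forall]
  rw [hpi, Measure.pi_pi, Fintype.prod_prod_type]
  exact prod_congr rfl fun i _ => hμ.measure_cylinder hu _

theorem supDist_nonneg {ι : Type*} (p q : ι → ℝ) : 0 ≤ supDist p q :=
  Real.iSup_nonneg fun _ => abs_nonneg _

theorem integral_supDist_le {Ω ι : Type*} [MeasurableSpace Ω] [Nonempty ι] {μ : Measure Ω}
    [IsFiniteMeasure μ] {F : Ω → ι → ℝ} {q : ι → ℝ} {c : ℝ}
    (hF : MeasurableSet {ω | F ω ≠ q}) (hc : ∀ ω j, |F ω j - q j| ≤ c) :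
    ∫ ω, supDist (F ω) q ∂μ ≤ c * μ.real {ω | F ω ≠ q} := by
  have hle : ∀ ω, supDist (F ω) q ≤ {ω | F ω ≠ q}.indicator (fun _ => c) ω := by
    intro ω
    by_cases h : F ω = q
    · simp [supDist, h]
    · rw [Set.indicator_of_mem h]
      exact ciSup_le (hc ω)
  calc ∫ ω, supDist (F ω) q ∂μ ≤ ∫ ω, {ω | F ω ≠ q}.indicator (fun _ => c) ω ∂μ :=
        integral_mono_of_nonneg (ae_of_all _ fun ω => supDist_nonneg _ _)
          ((integrable_const c).indicator hF) (ae_of_all _ hle)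
    _ = c * μ.real {ω | F ω ≠ q} := by rw [integral_indicator_const c hF, smul_eq_mul, mul_comm]

theorem tsum_list_length_eq {α : Type*} [Fintype α] (f : ℕ → ENNReal) :
    ∑' l : List α, f l.length = ∑' d, (Fintype.card α : ENNReal) ^ d * f d := by
  rw [← List.equivSigmaTuple.symm.tsum_eq, ENNReal.tsum_sigma']
  refine tsum_congr fun d => ?_
  simp [List.equivSigmaTuple]

theorem pref_add (b : ℕ → Bool) (d j : ℕ) :
    pref b (d + j) = pref b d ++ List.ofFn fun k : Fin j => b (d + k) :=
  List.ofFn_add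

theorem take_pref (b : ℕ → Bool) {l m : ℕ} (h : l ≤ m) : (pref b m).take l = pref b l := by
  rw [pref, ← Fin.ofFn_take_eq_take_ofFn h]
  rfl

theorem pref_eq_of_isPrefix {b : ℕ → Bool} {u v : List Bool} (hu : pref b u.length = u)
    (hvu : v <+: u) : pref b v.length = v := by
  rw [← take_pref b hvu.length_le, hu, ← List.prefix_iff_eq_take.1 hvu]

def pathBelow (v : List Bool) (w : Fin v.length → Bool) (j : Fin (v.length + 1)) : List Bool :=
  v ++ (List.ofFn w).take j

theorem length_pathBelow (v : List Bool) (w : Fin v.length → Bool) (j : Fin (v.length + 1)) :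
    (pathBelow v w j).length = v.length + j := by
  simp [pathBelow, Nat.le_of_lt_succ j.2]

theorem pathBelow_injective (v : List Bool) (w : Fin v.length → Bool) :
    Function.Injective (pathBelow v w) := fun j j' h => by
  have := congrArg List.length h
  rw [length_pathBelow, length_pathBelow] at this
  exact Fin.ext (by omega)

theorem qBranch_pref (b : ℕ → Bool) (m : ℕ) : qBranch b (pref b m) = 2 / 3 := by
  simp [qBranch, pref]

theorem qBranch_pathBelow_of_pref_eq {b : ℕ → Bool} {v : List Bool} (hv : pref b v.length = v)
    (j : Fin (v.length + 1)) : qBranch b (pathBelow v (fun k => b (v.length + k)) j) = 2 / 3 := by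
  have hpath : pathBelow v (fun k => b (v.length + k)) j = pref b (v.length + j) := by
    rw [pathBelow, ← Fin.ofFn_take_eq_take_ofFn (Nat.le_of_lt_succ j.2), pref_add, hv]
    rfl
  rw [hpath, qBranch_pref]

theorem qBranch_pathBelow_of_pref_ne {b : ℕ → Bool} {v : List Bool} (hv : pref b v.length ≠ v)
    (w : Fin v.length → Bool) (j : Fin (v.length + 1)) : qBranch b (pathBelow v w j) = 1 / 3 :=
  if_neg fun h => hv (pref_eq_of_isPrefix h (List.prefix_append _ _))

def onesAlong (n : ℕ) (S : Fin n → List Bool → Bool) (v : List Bool) (w : Fin v.length → Bool) :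
    ℕ :=
  ∑ c : Fin n × Fin (v.length + 1), (S c.1 (pathBelow v w c.2)).toNat

noncomputable def treeEstimator (n : ℕ) (S : Fin n → List Bool → Bool) (v : List Bool) : ℝ :=
  if ∃ w, n * (v.length + 1) ≤ 2 * onesAlong n S v w then 2 / 3 else 1 / 3

theorem measurable_onesAlong (n : ℕ) (v : List Bool) (w : Fin v.length → Bool) :
    Measurable fun S => onesAlong n S v w :=
  Finset.measurable_sum _ fun c _ => (measurable_from_top (f := Bool.toNat)).comp
    ((measurable_pi_apply _).comp (measurable_pi_apply c.1))

theorem measurable_treeEstimator (n : ℕ) : Measurable (treeEstimator n) := by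
  refine measurable_pi_lambda _ fun v => Measurable.ite ?_ measurable_const measurable_const
  simp only [Set.ofPred_exists]
  exact .iUnion fun w => measurableSet_le measurable_const
    ((measurable_onesAlong n v w).const_mul 2)

theorem treeEstimator_mem_Icc (n : ℕ) (S : Fin n → List Bool → Bool) (v : List Bool) :
    treeEstimator n S v ∈ Set.Icc (0 : ℝ) 1 := by
  unfold treeEstimator
  split_ifs <;> norm_num

theorem abs_treeEstimator_sub_qBranch_le (b : ℕ → Bool) (n : ℕ) (S : Fin n → List Bool → Bool)
    (v : List Bool) : |treeEstimator n S v - qBranch b v| ≤ 1 / 3 := by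
  unfold treeEstimator qBranch
  split_ifs <;> norm_num [abs_le]

-- `4 / 3` is the mean of `2 ^ X` for `X ∼ Bernoulli(1/3)`, and a failing path of `d + 1` vertices
-- carries at least `n / 2 * (d + 1)` improbable bits.
noncomputable def errorRate (n : ℕ) : ℝ := (4 / 3) ^ n / 2 ^ (n / 2)

theorem errorRate_nonneg (n : ℕ) : 0 ≤ errorRate n := by
  unfold errorRate
  positivity

theorem measure_sum_toNat_ge_le_errorRate {Ω : Type*} [MeasurableSpace Ω] (ν : Measure Ω)
    {n d : ℕ} {X : Fin n × Fin (d + 1) → Ω → Bool}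
    (hX : ∀ g : Fin n × Fin (d + 1) → Bool,
      ν {ω | ∀ c, X c ω = g c} = ∏ c, ENNReal.ofReal (if g c then 1 / 3 else 2 / 3)) :
    ν {ω | n / 2 * (d + 1) ≤ ∑ c, (X c ω).toNat} ≤ ENNReal.ofReal (errorRate n ^ (d + 1)) := by
  convert measure_sum_toNat_ge_le ν (w := fun x => if x then 1 / 3 else 2 / 3)
    (fun x => by split_ifs <;> norm_num) hX (n / 2 * (d + 1)) using 2
  rw [errorRate, div_pow, ← pow_mul, ← pow_mul, Fintype.card_prod, Fintype.card_fin,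
    Fintype.card_fin]
  norm_num

section

variable {b : ℕ → Bool} {μ : Measure (List Bool → Bool)}

theorem measure_treeEstimator_ne_of_pref_eq (hμ : IsBernoulliProduct (qBranch b) μ) (n : ℕ)
    {v : List Bool} (hv : pref b v.length = v) :
    Measure.pi (fun _ : Fin n => μ) {S | treeEstimator n S v ≠ qBranch b v}
      ≤ ENNReal.ofReal (errorRate n ^ (v.length + 1)) := by
  set w : Fin v.length → Bool := fun k => b (v.length + k)
  have hsub : {S | treeEstimator n S v ≠ qBranch b v}
      ⊆ {S | n / 2 * (v.length + 1)
          ≤ ∑ c : Fin n × Fin (v.length + 1), (!S c.1 (pathBelow v w c.2)).toNat} := by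
    intro S hS
    have hlt : 2 * onesAlong n S v w < n * (v.length + 1) := by
      by_contra! h
      exact hS (by rw [treeEstimator, if_pos ⟨w, h⟩, qBranch, if_pos hv])
    have hsum : onesAlong n S v w
        + ∑ c : Fin n × Fin (v.length + 1), (!S c.1 (pathBelow v w c.2)).toNat
          = n * (v.length + 1) := by
      rw [onesAlong, ← sum_add_distrib,
        sum_congr rfl fun c _ => by cases S c.1 (pathBelow v w c.2) <;> rfl]
      simp
    have := Nat.mul_le_mul_right (v.length + 1) (Nat.div_mul_le_self n 2)
    simp only [Set.mem_ofPred_eq]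
    linarith
  refine (measure_mono hsub).trans (measure_sum_toNat_ge_le_errorRate _ fun g => ?_)
  simp_rw [Bool.not_eq_eq_eq_not]
  rw [hμ.measure_pi_cylinder (pathBelow_injective v w)]
  refine prod_congr rfl fun c _ => ?_
  rw [qBranch_pathBelow_of_pref_eq hv]
  cases g c <;> norm_num

theorem measure_treeEstimator_ne_of_pref_ne (hμ : IsBernoulliProduct (qBranch b) μ) (n : ℕ)
    {v : List Bool} (hv : pref b v.length ≠ v) :
    Measure.pi (fun _ : Fin n => μ) {S | treeEstimator n S v ≠ qBranch b v}
      ≤ 2 ^ v.length * ENNReal.ofReal (errorRate n ^ (v.length + 1)) := by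
  have hsub : {S | treeEstimator n S v ≠ qBranch b v}
      ⊆ ⋃ w, {S | n / 2 * (v.length + 1) ≤ onesAlong n S v w} := by
    intro S hS
    obtain ⟨w, hw⟩ : ∃ w, n * (v.length + 1) ≤ 2 * onesAlong n S v w := by
      by_contra h
      exact hS (by rw [treeEstimator, if_neg h, qBranch, if_neg hv])
    have := Nat.mul_le_mul_right (v.length + 1) (Nat.div_mul_le_self n 2)
    simp only [Set.mem_iUnion, Set.mem_ofPred_eq]
    exact ⟨w, by linarith⟩
  refine (measure_mono hsub).trans <| (measure_iUnion_fintype_le _ _).trans ?_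
  have hw : ∀ w, Measure.pi (fun _ : Fin n => μ) {S | n / 2 * (v.length + 1) ≤ onesAlong n S v w}
      ≤ ENNReal.ofReal (errorRate n ^ (v.length + 1)) := fun w =>
    measure_sum_toNat_ge_le_errorRate _ fun g => by
      rw [hμ.measure_pi_cylinder (pathBelow_injective v w)]
      refine prod_congr rfl fun c _ => ?_
      rw [qBranch_pathBelow_of_pref_ne hv]
      cases g c <;> norm_num
  refine (sum_le_sum fun w _ => hw w).trans ?_
  simp

theorem measure_treeEstimator_apply_ne_le (hμ : IsBernoulliProduct (qBranch b) μ) (n : ℕ)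
    (v : List Bool) :
    Measure.pi (fun _ : Fin n => μ) {S | treeEstimator n S v ≠ qBranch b v}
      ≤ 2 ^ v.length * ENNReal.ofReal (errorRate n ^ (v.length + 1)) := by
  by_cases hv : pref b v.length = v
  · exact (measure_treeEstimator_ne_of_pref_eq hμ n hv).trans
      (le_mul_of_one_le_left' (one_le_pow₀ one_le_two))
  · exact measure_treeEstimator_ne_of_pref_ne hμ n hv

theorem tsum_two_pow_length_mul_le {r : ℝ} (hr₀ : 0 ≤ r) (hr : r ≤ 1 / 8) :
    ∑' v : List Bool, 2 ^ v.length * ENNReal.ofReal (r ^ (v.length + 1))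
      ≤ ENNReal.ofReal (2 * r) := by
  rw [tsum_list_length_eq (fun d => 2 ^ d * ENNReal.ofReal (r ^ (d + 1)))]
  have hterm : ∀ d : ℕ, (Fintype.card Bool : ENNReal) ^ d * (2 ^ d * ENNReal.ofReal (r ^ (d + 1)))
      ≤ ENNReal.ofReal (r * (1 / 2) ^ d) := by
    intro d
    rw [Fintype.card_bool, Nat.cast_ofNat, ← mul_assoc, ← mul_pow, two_mul, two_add_two_eq_four,
      ← ENNReal.ofReal_ofNat 4, ← ENNReal.ofReal_pow (by norm_num),
      ← ENNReal.ofReal_mul (by positivity)]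
    refine ENNReal.ofReal_le_ofReal ?_
    calc 4 ^ d * r ^ (d + 1) = r * (4 * r) ^ d := by ring
      _ ≤ r * (1 / 2) ^ d := by gcongr; linarith
  calc _ ≤ ∑' d : ℕ, ENNReal.ofReal (r * (1 / 2) ^ d) := ENNReal.tsum_le_tsum hterm
    _ = ENNReal.ofReal (2 * r) := by
      rw [← ENNReal.ofReal_tsum_of_nonneg (fun d => by positivity)
        ((summable_geometric_two).mul_left r), tsum_mul_left, tsum_geometric_two, mul_comm]

theorem measure_treeEstimator_ne_le (hμ : IsBernoulliProduct (qBranch b) μ) {n : ℕ}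
    (hn : errorRate n ≤ 1 / 8) :
    Measure.pi (fun _ : Fin n => μ) {S | treeEstimator n S ≠ qBranch b}
      ≤ ENNReal.ofReal (2 * errorRate n) := by
  have hunion : {S | treeEstimator n S ≠ qBranch b}
      = ⋃ v, {S | treeEstimator n S v ≠ qBranch b v} := by
    ext S
    simp [Function.ne_iff]
  rw [hunion]
  exact (measure_iUnion_le _).trans <| (ENNReal.tsum_le_tsum
    (measure_treeEstimator_apply_ne_le hμ n)).trans
    (tsum_two_pow_length_mul_le (errorRate_nonneg n) hn)

end

theorem tendsto_errorRate : Tendsto errorRate atTop (nhds 0) := by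
  have hle : ∀ n, errorRate n ≤ 4 / 3 * (8 / 9) ^ (n / 2) := by
    intro n
    rw [errorRate, div_le_iff₀ (by positivity)]
    calc (4 / 3 : ℝ) ^ n ≤ (4 / 3) ^ (2 * (n / 2) + 1) :=
          pow_le_pow_right₀ (by norm_num) (by omega)
      _ = 4 / 3 * (8 / 9) ^ (n / 2) * 2 ^ (n / 2) := by
          rw [pow_succ, pow_mul, mul_comm, mul_assoc, ← mul_pow]
          norm_num
  have hlim : Tendsto (fun n : ℕ => 4 / 3 * (8 / 9 : ℝ) ^ (n / 2)) atTop (nhds 0) := by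
    simpa using ((tendsto_pow_atTop_nhds_zero_of_lt_one (by norm_num) (by norm_num)).comp
      (Nat.tendsto_div_const_atTop two_ne_zero)).const_mul (4 / 3 : ℝ)
  exact tendsto_of_tendsto_of_tendsto_of_le_of_le tendsto_const_nhds hlim
    errorRate_nonneg hle

/-- The collection `Q_tree = {Prod (qBranch b) : b ∈ {0,1}^ℕ}` is UME-learnable:
there are measurable estimators `A n : ({0,1}^V)^n → [0,1]^V` such that for every
branch `b` and `μ = Prod (qBranch b)`, the expected sup-distance
`E_{S ∼ μ^n} ‖A n S − qBranch b‖_∞` tends to `0`. -/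
theorem Qtree_UMELearnable :
    ∃ A : (n : ℕ) → (Fin n → (List Bool → Bool)) → List Bool → ℝ,
      (∀ n, Measurable (A n)) ∧
      (∀ n S v, A n S v ∈ Set.Icc (0 : ℝ) 1) ∧
      ∀ b : ℕ → Bool, ∀ μ : Measure (List Bool → Bool), IsBernoulliProduct (qBranch b) μ →
        Tendsto (fun n : ℕ =>
            ∫ S, supDist (A n S) (qBranch b) ∂(Measure.pi fun _ : Fin n => μ))
          atTop (nhds 0) := by
  refine ⟨treeEstimator, measurable_treeEstimator, treeEstimator_mem_Icc, fun b μ hμ => ?_⟩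
  have := hμ.1
  have hbound : ∀ᶠ n in atTop,
      ∫ S, supDist (treeEstimator n S) (qBranch b) ∂(Measure.pi fun _ : Fin n => μ)
        ≤ 1 / 3 * (2 * errorRate n) := by
    filter_upwards [tendsto_errorRate.eventually (ge_mem_nhds (by norm_num : (0 : ℝ) < 1 / 8))]
      with n hn
    calc _ ≤ 1 / 3 * (Measure.pi fun _ : Fin n => μ).real {S | treeEstimator n S ≠ qBranch b} :=
          integral_supDist_le ((measurable_treeEstimator n) (measurableSet_singleton _).compl)
            (abs_treeEstimator_sub_qBranch_le b n)
      _ ≤ 1 / 3 * (2 * errorRate n) := by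
          gcongr
          exact ENNReal.toReal_le_of_le_ofReal (by linarith [errorRate_nonneg n])
            (measure_treeEstimator_ne_le hμ hn)
  have hlim : Tendsto (fun n => 1 / 3 * (2 * errorRate n)) atTop (nhds 0) := by
    simpa using (tendsto_errorRate.const_mul 2).const_mul (1 / 3 : ℝ)
  exact tendsto_of_tendsto_of_tendsto_of_le_of_le' tendsto_const_nhds hlim
    (.of_forall fun n => integral_nonneg fun S => supDist_nonneg _ _) hbound
end

section
/- Let b* ∈ {0,1}^ℕ, let μ = Prod(q^{b*}) ∈ Q_tree, and let X^(1),…,X^(n) be n ≥ 36 i.i.d. samples from μ. For a branch b ∈ {0,1}^ℕ define φ(b) = liminf_{d→∞} (1/d) Σ_{j=1}^d (1/n) Σ_{i=1}^n X^(i)_{(b_1,…,b_j)}, where (b_1,…,b_j) is the length-j prefix of b. Then with probability 1: φ(b*) = 2/3 and φ(b) ≤ 1/2 for every branch b ≠ b*; in particular b* is the unique branch with φ(b) = 2/3. -/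
open MeasureTheory Filter

/-- `φ(b)`: the liminf, over the depth `d`, of the average along the first `d` vertices
of the branch `b` of the empirical means computed from the `n` samples `S`. -/
noncomputable def phi (n : ℕ) (S : Fin n → (List Bool → Bool)) (b : ℕ → Bool) : ℝ :=
  Filter.liminf
    (fun d : ℕ => (1 / (d : ℝ)) * ∑ j ∈ Finset.range d,
      (1 / (n : ℝ)) * ∑ i : Fin n, (if S i (pref b (j + 1)) then (1 : ℝ) else 0))
    Filter.atTop

open ProbabilityTheory Real Finset
open scoped Topology

/-! The coordinates `S i v` of the samples are independent Bernoulli variables (the law of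
`Prod q` is the infinite product of its marginals), so Hoeffding's inequality applies to any
finite family of them. Along `b*` all vertices have mean `2/3`; a deviation `ε` of the average
over the first `d` levels has probability `≤ 2 exp (-2 ε² n d)`, which is summable in `d`, and
Borel–Cantelli gives `φ(b*) = 2/3`. Once a branch has left `b*` (at its letter `k`) all its
vertices have mean `1/3`, so an average above `1/2` on its levels `k + 1, …, d` has
probability `≤ 2 exp (-n (d - k) / 18)`. A union bound over the `2 ^ d` possible paths keeps
the series summable because `2 exp (-n / 18) < 1` once `n > 18`; hence almost surely, for
every `k`, eventually every branch leaving `b*` at `k` has average `≤ 1/2 + k/d`, and its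
`liminf` is at most `1/2`. -/

section Hoeffding

variable {Ω κ : Type*} {mΩ : MeasurableSpace Ω} {P : Measure Ω} [IsProbabilityMeasure P]
  {X : κ → Ω → Bool} {s : Finset κ} {p t : ℝ}

lemma measureReal_le_sum_ite_sub_le (hX : iIndepFun X P) (hXm : ∀ a, Measurable (X a))
    (hp : ∀ a ∈ s, P.real {ω | X a ω = true} = p) (ht : 0 ≤ t) :
    P.real {ω | t ≤ ∑ a ∈ s, ((if X a ω then 1 else 0) - p)} ≤ exp (-2 * t ^ 2 / #s) := by
  have hmean : ∀ a ∈ s, P[fun ω => if X a ω then (1 : ℝ) else 0] = p := fun a ha => by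
    rw [← hp a ha, ← integral_indicator_one (measurableSet_eq_fun (hXm a) measurable_const)]
    congr 1 with ω
    by_cases h : X a ω <;> simp [h]
  have hsubG : ∀ a ∈ s, HasSubgaussianMGF (fun ω => (if X a ω then (1 : ℝ) else 0) - p)
      ((‖(1 : ℝ) - 0‖₊ / 2) ^ 2) P := fun a ha => by
    rw [← hmean a ha]
    have hm : Measurable fun b : Bool => if b then (1 : ℝ) else 0 := Measurable.of_discrete
    refine hasSubgaussianMGF_of_mem_Icc (hm.comp (hXm a)).aemeasurable (ae_of_all _ fun ω => ?_)
    by_cases h : X a ω <;> simp [h]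
  have hindep : iIndepFun (fun a ω => (if X a ω then (1 : ℝ) else 0) - p) P :=
    hX.comp (fun _ b => (if b then (1 : ℝ) else 0) - p) fun _ => Measurable.of_discrete
  refine (HasSubgaussianMGF.measure_sum_ge_le_of_iIndepFun hindep hsubG ht).trans_eq ?_
  congr 1
  simp only [sum_const, nsmul_eq_mul, NNReal.coe_mul, NNReal.coe_natCast, sub_zero, nnnorm_one]
  push_cast
  ring

lemma measureReal_le_abs_sum_ite_sub_le (hX : iIndepFun X P) (hXm : ∀ a, Measurable (X a))
    (hp : ∀ a ∈ s, P.real {ω | X a ω = true} = p) (ht : 0 ≤ t) :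
    P.real {ω | t ≤ |∑ a ∈ s, ((if X a ω then 1 else 0) - p)|} ≤ 2 * exp (-2 * t ^ 2 / #s) := by
  -- the lower tail is the upper tail of the negated variables, of mean `1 - p`
  have hnot : ∀ a ∈ s, P.real {ω | (not ∘ X a) ω = true} = 1 - p := fun a ha => by
    rw [← hp a ha, ← probReal_compl_eq_one_sub (measurableSet_eq_fun (hXm a) measurable_const)]
    congr 1 with ω
    simp
  have hneg : ∀ ω, ∑ a ∈ s, ((if (not ∘ X a) ω then (1 : ℝ) else 0) - (1 - p))
      = -∑ a ∈ s, ((if X a ω then 1 else 0) - p) := fun ω => by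
    rw [← sum_neg_distrib]
    refine sum_congr rfl fun a _ => ?_
    cases h : X a ω <;> simp [h]
  calc _ ≤ P.real ({ω | t ≤ ∑ a ∈ s, ((if X a ω then 1 else 0) - p)} ∪
          {ω | t ≤ ∑ a ∈ s, ((if (not ∘ X a) ω then 1 else 0) - (1 - p))}) :=
        measureReal_mono fun ω hω => by
          simpa only [Set.mem_union, Set.mem_ofPred_eq, hneg] using le_abs.1 hω
    _ ≤ _ := measureReal_union_le _ _
    _ ≤ exp (-2 * t ^ 2 / #s) + exp (-2 * t ^ 2 / #s) := add_le_add
        (measureReal_le_sum_ite_sub_le hX hXm hp ht)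
        (measureReal_le_sum_ite_sub_le (hX.comp (fun _ => not) fun _ => Measurable.of_discrete)
          (fun a => Measurable.of_discrete.comp (hXm a)) hnot ht)
    _ = _ := (two_mul _).symm

end Hoeffding

lemma ae_eventually_notMem_of_measureReal_le_geometric {Ω : Type*} {mΩ : MeasurableSpace Ω}
    {P : Measure Ω} [IsFiniteMeasure P] {s : ℕ → Set Ω} {C r : ℝ} (hr0 : 0 ≤ r) (hr : r < 1)
    (h : ∀ d, P.real (s d) ≤ C * r ^ d) : ∀ᵐ ω ∂P, ∀ᶠ d in atTop, ω ∉ s d := by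
  have hsum : Summable fun d => P.real (s d) := Summable.of_nonneg_of_le
    (fun _ => measureReal_nonneg) h ((summable_geometric_of_lt_one hr0 hr).mul_left C)
  refine ae_eventually_notMem ?_
  simp_rw [← fun d => ofReal_measureReal (μ := P) (s := s d) (measure_ne_top P _)]
  rw [← ENNReal.ofReal_tsum_of_nonneg (fun _ => measureReal_nonneg) hsum]
  exact ENNReal.ofReal_ne_top

namespace IsBernoulliProduct

variable {ι : Type*} {q : ι → ℝ} {μ : Measure (ι → Bool)}

lemma measure_eval_eq (hμ : IsBernoulliProduct q μ) (v : ι) (c : Bool) :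
    μ {x | x v = c} = ENNReal.ofReal (if c then q v else 1 - q v) := by
  simpa using hμ.2 {v} fun _ => c

lemma iIndepFun_eval (hμ : IsBernoulliProduct q μ) : iIndepFun (fun v (x : ι → Bool) => x v) μ := by
  have := hμ.1
  classical
  rw [iIndepFun_iff_finset]
  intro F
  refine (iIndepFun_iff_map_fun_eq_pi_map (f := fun (j : F) (x : ι → Bool) => x j)
    fun j => (measurable_pi_apply (j : ι)).aemeasurable).2 ?_
  refine Measure.ext_of_singleton fun f => ?_
  let g : ι → Bool := fun j => if h : j ∈ F then f ⟨j, h⟩ else false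
  rw [Measure.pi_singleton, Measure.map_apply (by fun_prop) (measurableSet_singleton f)]
  have hcyl : (fun (x : ι → Bool) (j : F) => x j) ⁻¹' {f} = {x | ∀ j ∈ F, x j = g j} := by
    ext x
    simp only [Set.mem_preimage, Set.mem_singleton_iff, funext_iff, Subtype.forall,
      Set.mem_ofPred_eq, g]
    exact forall₂_congr fun j hj => by simp [hj]
  rw [hcyl, hμ.2, ← prod_coe_sort]
  refine prod_congr rfl fun j _ => ?_
  rw [Measure.map_apply (by fun_prop) (measurableSet_singleton _)]
  simpa [g, Set.preimage] using (hμ.measure_eval_eq j (f j)).symm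

lemma eq_infinitePi (hμ : IsBernoulliProduct q μ) :
    μ = Measure.infinitePi fun v => μ.map fun x => x v := by
  have := hμ.1
  simpa using (iIndepFun_iff_map_fun_eq_infinitePi_map (fun v => measurable_pi_apply v)).1
    hμ.iIndepFun_eval

lemma iIndepFun_pi_eval (hμ : IsBernoulliProduct q μ) {σ : Type*} [Fintype σ] :
    iIndepFun (fun (a : σ × ι) (S : σ → ι → Bool) => S a.1 a.2) (Measure.pi fun _ => μ) := by
  have := hμ.1
  have := fun v => Measure.isProbabilityMeasure_map (μ := μ) (measurable_pi_apply v).aemeasurable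
  rw [← Measure.infinitePi_eq_pi, hμ.eq_infinitePi]
  exact iIndepFun_uncurry_infinitePi' (X := fun _ _ => id) _ fun _ _ => measurable_id

lemma measureReal_pi_eval_eq_true (hμ : IsBernoulliProduct q μ) {σ : Type*} [Fintype σ]
    {v : ι} (hq : 0 ≤ q v) (i : σ) :
    (Measure.pi fun _ => μ).real {S : σ → ι → Bool | S i v = true} = q v := by
  have := hμ.1
  change (Measure.pi fun _ => μ).real (Function.eval i ⁻¹' {x | x v = true}) = q v
  rw [(measurePreserving_eval (fun _ : σ => μ) i).measureReal_preimage
    (measurableSet_eq_fun (measurable_pi_apply v) measurable_const).nullMeasurableSet]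
  simp [measureReal_def, hμ.measure_eval_eq v true, hq]

lemma measureReal_le_abs_sum_sum_ite_sub_le (hμ : IsBernoulliProduct q μ) {σ : Type*} [Fintype σ]
    {V : Finset ι} {p t : ℝ} (hp : ∀ v ∈ V, q v = p) (hp0 : 0 ≤ p) (ht : 0 ≤ t) :
    (Measure.pi fun _ => μ).real
        {S : σ → ι → Bool | t ≤ |∑ v ∈ V, ∑ i, ((if S i v then 1 else 0) - p)|}
      ≤ 2 * exp (-2 * t ^ 2 / (Fintype.card σ * #V)) := by
  have := hμ.1
  have hmean : ∀ a ∈ (univ : Finset σ) ×ˢ V,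
      (Measure.pi fun _ => μ).real {S : σ → ι → Bool | S a.1 a.2 = true} = p := fun a ha => by
    have hv := hp a.2 (mem_product.1 ha).2
    rw [hμ.measureReal_pi_eval_eq_true (hv ▸ hp0) a.1, hv]
  have h := measureReal_le_abs_sum_ite_sub_le (hμ.iIndepFun_pi_eval (σ := σ))
    (fun a => (measurable_pi_apply a.2).comp (measurable_pi_apply a.1)) hmean ht
  simpa only [sum_product_right, card_product, card_univ, Nat.cast_mul] using h

end IsBernoulliProduct

section Tree

lemma length_pref (b : ℕ → Bool) (j : ℕ) : (pref b j).length = j := List.length_ofFn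

lemma pref_congr {b b' : ℕ → Bool} {j : ℕ} (h : ∀ m < j, b m = b' m) : pref b j = pref b' j :=
  congrArg List.ofFn (funext fun m => h m m.2)

lemma pref_ne_of_ne {b b' : ℕ → Bool} {k j : ℕ} (hk : b k ≠ b' k) (hkj : k < j) :
    pref b j ≠ pref b' j := fun h => hk (congrFun (List.ofFn_injective h) ⟨k, hkj⟩)

lemma qBranch_pref_self (b : ℕ → Bool) (j : ℕ) : qBranch b (pref b j) = 2 / 3 := by
  simp [qBranch, length_pref]

lemma qBranch_pref_of_ne {b bstar : ℕ → Bool} {k j : ℕ} (hk : b k ≠ bstar k) (hkj : k < j) :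
    qBranch bstar (pref b j) = 1 / 3 := by
  simp [qBranch, length_pref, pref_ne_of_ne hk.symm hkj]

variable {n : ℕ}

def pathCount (S : Fin n → List Bool → Bool) (b : ℕ → Bool) (J : Finset ℕ) : ℝ :=
  ∑ j ∈ J, ∑ i, if S i (pref b (j + 1)) then 1 else 0

noncomputable def pathMean (n : ℕ) (S : Fin n → List Bool → Bool) (b : ℕ → Bool) (d : ℕ) : ℝ :=
  (1 / (d : ℝ)) * ∑ j ∈ range d,
    (1 / (n : ℝ)) * ∑ i : Fin n, (if S i (pref b (j + 1)) then 1 else 0)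

lemma phi_eq_liminf_pathMean (S : Fin n → List Bool → Bool) (b : ℕ → Bool) :
    phi n S b = liminf (pathMean n S b) atTop := rfl

lemma pathMean_eq (S : Fin n → List Bool → Bool) (b : ℕ → Bool) (d : ℕ) :
    pathMean n S b d = pathCount S b (range d) / (n * d) := by
  simp only [pathMean, pathCount, ← mul_sum]
  field_simp

lemma pathCount_nonneg (S : Fin n → List Bool → Bool) (b : ℕ → Bool) (J : Finset ℕ) :
    0 ≤ pathCount S b J :=
  sum_nonneg fun _ _ => sum_nonneg fun _ _ => by split_ifs <;> norm_num

lemma pathCount_le (S : Fin n → List Bool → Bool) (b : ℕ → Bool) (J : Finset ℕ) :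
    pathCount S b J ≤ n * #J := by
  calc pathCount S b J ≤ ∑ _j ∈ J, ∑ _i : Fin n, (1 : ℝ) :=
        sum_le_sum fun _ _ => sum_le_sum fun _ _ => by split_ifs <;> norm_num
    _ = n * #J := by simp [mul_comm]

lemma pathMean_nonneg (S : Fin n → List Bool → Bool) (b : ℕ → Bool) (d : ℕ) :
    0 ≤ pathMean n S b d := by
  rw [pathMean_eq]
  exact div_nonneg (pathCount_nonneg S b _) (by positivity)

lemma pathMean_le_of_pathCount_Ico_le {S : Fin n → List Bool → Bool} {b : ℕ → Bool} {k d : ℕ}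
    (hn : 0 < n) (hkd : k ≤ d) (hd : 0 < d) (h : pathCount S b (Ico k d) ≤ n * (d - k : ℕ) / 2) :
    pathMean n S b d ≤ 1 / 2 + k / d := by
  have hsplit : pathCount S b (range d) = pathCount S b (range k) + pathCount S b (Ico k d) :=
    (sum_range_add_sum_Ico _ hkd).symm
  have hhead := pathCount_le S b (range k)
  rw [card_range] at hhead
  rw [Nat.cast_sub hkd] at h
  have hnd : (0 : ℝ) < n * d := by positivity
  have hrhs : (1 / 2 + k / d : ℝ) * (n * d) = n * d / 2 + n * k := by field_simp
  rw [pathMean_eq, div_le_iff₀ hnd, hrhs, hsplit]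
  nlinarith [(Nat.cast_nonneg n : (0 : ℝ) ≤ n), (Nat.cast_nonneg k : (0 : ℝ) ≤ k)]

lemma phi_le_half {S : Fin n → List Bool → Bool} {b : ℕ → Bool} {k : ℕ} (hn : 0 < n)
    (h : ∀ᶠ d in atTop, pathCount S b (Ico k d) ≤ n * (d - k : ℕ) / 2) : phi n S b ≤ 1 / 2 := by
  have hlim : Tendsto (fun d : ℕ => 1 / 2 + (k : ℝ) / d) atTop (𝓝 (1 / 2)) := by
    simpa using tendsto_const_nhds.add (tendsto_const_div_atTop_nhds_zero_nat (k : ℝ))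
  rw [phi_eq_liminf_pathMean, ← hlim.liminf_eq]
  refine liminf_le_liminf ?_ (isBoundedUnder_of ⟨0, fun d => pathMean_nonneg S b d⟩)
    hlim.isBoundedUnder_le.isCoboundedUnder_ge
  filter_upwards [h, eventually_ge_atTop k, eventually_gt_atTop 0] with d hd hkd hd0
  exact pathMean_le_of_pathCount_Ico_le hn hkd hd0 hd

variable {bstar : ℕ → Bool} {μ : Measure (List Bool → Bool)}

lemma measureReal_le_abs_pathCount_sub_le (hμ : IsBernoulliProduct (qBranch bstar) μ)
    {b : ℕ → Bool} {J : Finset ℕ} {p t : ℝ} (hp : ∀ j ∈ J, qBranch bstar (pref b (j + 1)) = p)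
    (hp0 : 0 ≤ p) (ht : 0 ≤ t) :
    (Measure.pi fun _ : Fin n => μ).real {S | t ≤ |pathCount S b J - n * #J * p|}
      ≤ 2 * exp (-2 * t ^ 2 / (n * #J)) := by
  have hinj : Set.InjOn (fun j => pref b (j + 1)) J := fun j _ j' _ h => by
    simpa [length_pref] using congrArg List.length h
  have hV := hμ.measureReal_le_abs_sum_sum_ite_sub_le (σ := Fin n)
    (V := J.image fun j => pref b (j + 1)) (by simpa using hp) hp0 ht
  simp only [sum_image hinj, card_image_of_injOn hinj, Fintype.card_fin] at hV
  convert hV using 6 with S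
  simp only [pathCount, sum_sub_distrib, sum_const, card_univ, Fintype.card_fin, nsmul_eq_mul]
  ring

lemma measureReal_le_abs_pathCount_self_sub_le (hμ : IsBernoulliProduct (qBranch bstar) μ)
    {ε : ℝ} (hε : 0 ≤ ε) (d : ℕ) :
    (Measure.pi fun _ : Fin n => μ).real
        {S | ε * (n * d) ≤ |pathCount S bstar (range d) - n * d * (2 / 3)|}
      ≤ 2 * exp (-(2 * ε ^ 2 * n)) ^ d := by
  have h := measureReal_le_abs_pathCount_sub_le hμ (n := n) (J := range d) (p := 2 / 3)
    (fun j _ => qBranch_pref_self bstar (j + 1)) (by norm_num) (t := ε * (n * d)) (by positivity)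
  rw [card_range] at h
  refine h.trans_eq ?_
  rw [← exp_nat_mul]
  rcases eq_or_ne ((n : ℝ) * d) 0 with h0 | h0
  · simp [h0, mul_comm (d : ℝ), mul_assoc]
  · congr 2
    field_simp

lemma ae_tendsto_pathMean_self (hμ : IsBernoulliProduct (qBranch bstar) μ) (hn : 0 < n) :
    ∀ᵐ S ∂(Measure.pi fun _ : Fin n => μ), Tendsto (pathMean n S bstar) atTop (𝓝 (2 / 3)) := by
  have := hμ.1
  have hdev : ∀ L : ℕ, ∀ᵐ S ∂(Measure.pi fun _ : Fin n => μ), ∀ᶠ d in atTop,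
      |pathCount S bstar (range d) - n * d * (2 / 3)| < 1 / (L + 1) * (n * d) := fun L => by
    have hε : (0 : ℝ) < 1 / (L + 1) := by positivity
    filter_upwards [ae_eventually_notMem_of_measureReal_le_geometric (exp_nonneg _)
      (exp_lt_one_iff.2 (neg_lt_zero.2 (by positivity)))
      (measureReal_le_abs_pathCount_self_sub_le hμ hε.le)] with S hS
    exact hS.mono fun d hd => not_le.1 hd
  filter_upwards [ae_all_iff.2 hdev] with S hS
  refine Metric.tendsto_nhds.2 fun ε hε => ?_
  obtain ⟨L, hL⟩ := exists_nat_one_div_lt hε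
  filter_upwards [hS L, eventually_gt_atTop 0] with d hd hd0
  have hnd : (0 : ℝ) < n * d := by positivity
  have hmean : pathMean n S bstar d - 2 / 3
      = (pathCount S bstar (range d) - n * d * (2 / 3)) / (n * d) := by
    rw [pathMean_eq]; field_simp
  rw [Real.dist_eq, hmean, abs_div, abs_of_pos hnd, div_lt_iff₀ hnd]
  exact hd.trans (mul_lt_mul_of_pos_right hL hnd)

lemma measureReal_pathCount_Ico_gt_le (hμ : IsBernoulliProduct (qBranch bstar) μ)
    {b : ℕ → Bool} {k : ℕ} (hb : b k ≠ bstar k) (d : ℕ) :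
    (Measure.pi fun _ : Fin n => μ).real {S | n * (d - k : ℕ) / 2 < pathCount S b (Ico k d)}
      ≤ 2 * exp (-(n * (d - k : ℕ) / 18)) := by
  have := hμ.1
  have h := measureReal_le_abs_pathCount_sub_le hμ (n := n) (J := Ico k d) (p := 1 / 3)
    (fun j hj => qBranch_pref_of_ne hb (by rw [mem_Ico] at hj; omega)) (by norm_num)
    (t := n * (d - k : ℕ) / 6) (by positivity)
  rw [Nat.card_Ico] at h
  calc _ ≤ (Measure.pi fun _ : Fin n => μ).real
        {S | n * (d - k : ℕ) / 6 ≤ |pathCount S b (Ico k d) - n * (d - k : ℕ) * (1 / 3)|} :=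
        measureReal_mono fun S hS => by
          simp only [Set.mem_ofPred_eq] at hS ⊢
          exact le_abs.2 (Or.inl (by linarith))
    _ ≤ _ := h
    _ = _ := by
      rcases eq_or_ne ((n : ℝ) * (d - k : ℕ)) 0 with h0 | h0
      · simp [h0]
      · congr 2
        field_simp
        ring

/-- Levels below `d` only see the first `d` letters of a branch (`pref_congr`), so there the
`2 ^ d` branches `extendBranch g` stand for all branches. -/
def extendBranch {d : ℕ} (g : Fin d → Bool) : ℕ → Bool :=
  fun m => if h : m < d then g ⟨m, h⟩ else false

lemma measureReal_biUnion_pathCount_Ico_gt_le (hμ : IsBernoulliProduct (qBranch bstar) μ)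
    (k d : ℕ) :
    (Measure.pi fun _ : Fin n => μ).real
        (⋃ g ∈ univ.filter fun g : Fin d → Bool => extendBranch g k ≠ bstar k,
          {S | n * (d - k : ℕ) / 2 < pathCount S (extendBranch g) (Ico k d)})
      ≤ 2 * exp (n * k / 18) * (2 * exp (-(n / 18))) ^ d := by
  have hdk : (d : ℝ) - k ≤ (d - k : ℕ) := by
    have := (Nat.cast_le (α := ℝ)).2 (le_tsub_add : d ≤ d - k + k)
    push_cast at this
    linarith
  have hexp : exp (-(n * (d - k : ℕ) / 18)) ≤ exp (n * k / 18) * exp (-(n / 18)) ^ d := by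
    rw [← exp_nat_mul, ← exp_add]
    exact exp_le_exp.2 (by nlinarith [(Nat.cast_nonneg n : (0 : ℝ) ≤ n)])
  calc _ ≤ ∑ g ∈ univ.filter fun g : Fin d → Bool => extendBranch g k ≠ bstar k,
        (Measure.pi fun _ : Fin n => μ).real
          {S | n * (d - k : ℕ) / 2 < pathCount S (extendBranch g) (Ico k d)} :=
        measureReal_biUnion_finset_le _ _
    _ ≤ ∑ _g ∈ univ.filter fun g : Fin d → Bool => extendBranch g k ≠ bstar k,
        2 * exp (-(n * (d - k : ℕ) / 18)) :=
        sum_le_sum fun g hg => measureReal_pathCount_Ico_gt_le hμ (mem_filter.1 hg).2 d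
    _ ≤ 2 ^ d * (2 * exp (-(n * (d - k : ℕ) / 18))) := by
        rw [sum_const, nsmul_eq_mul]
        gcongr
        exact_mod_cast (card_filter_le _ _).trans (by simp)
    _ ≤ 2 ^ d * (2 * (exp (n * k / 18) * exp (-(n / 18)) ^ d)) := by gcongr
    _ = _ := by ring

lemma ae_eventually_pathCount_Ico_le (hμ : IsBernoulliProduct (qBranch bstar) μ) (hn : 18 < n) :
    ∀ᵐ S ∂(Measure.pi fun _ : Fin n => μ), ∀ k, ∀ᶠ d in atTop, ∀ b : ℕ → Bool, b k ≠ bstar k →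
      pathCount S b (Ico k d) ≤ n * (d - k : ℕ) / 2 := by
  have := hμ.1
  have hr : 2 * exp (-(n / 18 : ℝ)) < 1 := by
    have h1 : (1 : ℝ) < n / 18 := by
      rw [lt_div_iff₀ (by norm_num)]
      exact_mod_cast hn
    rw [exp_neg, ← div_eq_mul_inv, div_lt_one (exp_pos _)]
    linarith [add_one_le_exp (n / 18 : ℝ)]
  rw [ae_all_iff]
  intro k
  filter_upwards [ae_eventually_notMem_of_measureReal_le_geometric (by positivity) hr
    (measureReal_biUnion_pathCount_Ico_gt_le hμ k)] with S hS
  filter_upwards [hS, eventually_gt_atTop k] with d hd hkd b hb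
  have hext : ∀ m < d, extendBranch (fun m : Fin d => b m) m = b m := fun m hm => by
    simp [extendBranch, hm]
  have hpath :
      pathCount S (extendBranch fun m : Fin d => b m) (Ico k d) = pathCount S b (Ico k d) :=
    sum_congr rfl fun j hj => by
      rw [pref_congr fun m hm => hext m (by rw [mem_Ico] at hj; omega)]
  by_contra hlt
  refine hd (Set.mem_iUnion₂.2 ⟨fun m : Fin d => b m, mem_filter.2 ⟨mem_univ _, ?_⟩, ?_⟩)
  · rwa [hext k hkd]
  · simpa [hpath] using hlt

end Tree

/-- For `μ = Prod (qBranch b*) ∈ Q_tree` and `n ≥ 36` i.i.d. samples, almost surely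
`φ(b*) = 2/3`, `φ(b) ≤ 1/2` for every branch `b ≠ b*`, and in particular `b*` is the
unique branch with `φ(b) = 2/3`. -/
theorem tree_phi_identifies_branch (bstar : ℕ → Bool)
    (μ : Measure (List Bool → Bool)) (hμ : IsBernoulliProduct (qBranch bstar) μ)
    (n : ℕ) (hn : 36 ≤ n) :
    ∀ᵐ S ∂(Measure.pi fun _ : Fin n => μ),
      phi n S bstar = 2 / 3 ∧
      (∀ b : ℕ → Bool, b ≠ bstar → phi n S b ≤ 1 / 2) ∧
      (∀ b : ℕ → Bool, phi n S b = 2 / 3 → b = bstar) := by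
  filter_upwards [ae_tendsto_pathMean_self hμ (by omega : 0 < n),
    ae_eventually_pathCount_Ico_le hμ (by omega : 18 < n)] with S hself hoff
  have hhalf : ∀ b : ℕ → Bool, b ≠ bstar → phi n S b ≤ 1 / 2 := fun b hb => by
    obtain ⟨k, hk⟩ := Function.ne_iff.1 hb
    exact phi_le_half (by omega) ((hoff k).mono fun d hd => hd b hk)
  refine ⟨hself.liminf_eq, hhalf, fun b hb => ?_⟩
  by_contra hne
  linarith [hhalf b hne]
end
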